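/- arXiv:2007.15252 — 4 statements merged into one kernel-verified Lean document; each statement's English description precedes it below -/
import Mathlib

section
/- Let S be a p×p symmetric matrix and let Θ̂ ∈ ℳ^{p×p} be positive definite and minimize f(Θ) := ⟨Θ, S⟩ − log det Θ over Θ ∈ ℳ^{p×p}. Then for every positive definite Θ* ∈ ℳ^{p×p} with Σ* := (Θ*)⁻¹, the basic inequality L(Θ̂, Θ*) ≤ (1/(2p))·⟨S − Σ*, Θ* − Θ̂⟩ holds. -/
/-! Along the segment `Θ̂ + t (Θ* - Θ̂)`, `t ∈ [0, 1]`, which stays in the convex set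
`ℳ ∩ {Θ ≻ 0}`, the objective is minimal at `t = 0`; by Jacobi's formula
`d/dt log det (Θ̂ + t D) = tr (Θ̂⁻¹ D)` its derivative there is `⟨Θ* - Θ̂, S - Θ̂⁻¹⟩ ≥ 0`.
By bilinearity, `2p · L(Θ̂, Θ*) = ⟨S - Σ*, Θ* - Θ̂⟩ - ⟨Θ* - Θ̂, S - Θ̂⁻¹⟩`. -/

open MeasureTheory Matrix Real

namespace CovEst

/-- The convex cone of symmetric positive semidefinite matrices with
nonpositive off-diagonal entries (symmetric `M`-matrices). -/
def Mmat (m : Type*) [Fintype m] : Set (Matrix m m ℝ) :=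
  {A | A.PosSemidef ∧ ∀ i j, i ≠ j → A i j ≤ 0}

/-- Frobenius (trace) inner product `⟨A, B⟩ = tr (Aᵀ B)` on matrices. -/
noncomputable def mip {m : Type*} [Fintype m] (A B : Matrix m m ℝ) : ℝ :=
  (Aᵀ * B).trace

/-- The symmetrized Stein (divergence) loss
`L(Θ, Θ*) = (1/(2p)) ⟨Θ - Θ*, (Θ*)⁻¹ - Θ⁻¹⟩`. -/
noncomputable def stein {m : Type*} [Fintype m] [DecidableEq m] (T Ts : Matrix m m ℝ) : ℝ :=
  (2 * (Fintype.card m : ℝ))⁻¹ * mip (T - Ts) (Ts⁻¹ - T⁻¹)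

/-- Maximal correlation `max_{j ≠ k} Σ_{jk} / √(Σ_{jj} Σ_{kk})` of a covariance matrix. -/
noncomputable def maxCorr {m : Type*} (V : Matrix m m ℝ) : ℝ :=
  sSup {x | ∃ j k, j ≠ k ∧ x = V j k / Real.sqrt (V j j * V k k)}

/-- `γ(Σ) = (1 - max_{j ≠ k} Σ_{jk}/√(Σ_{jj}Σ_{kk}))⁻¹`. -/
noncomputable def gammaV {m : Type*} (V : Matrix m m ℝ) : ℝ := (1 - maxCorr V)⁻¹

/-- Largest off-diagonal entry. -/
noncomputable def maxOffDiag {m : Type*} (V : Matrix m m ℝ) : ℝ :=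
  sSup {x | ∃ j k, j ≠ k ∧ x = V j k}

/-- Entrywise sup-norm `‖A‖_∞ = max_{j,k} |A_{jk}|`. -/
noncomputable def norminf {m l : Type*} (A : Matrix m l ℝ) : ℝ :=
  sSup {x | ∃ i j, x = |A i j|}

/-- Sample covariance matrix `S = n⁻¹ Xᵀ X`. -/
noncomputable def sampleCov {n p : ℕ} (X : Fin n → Fin p → ℝ) : Matrix (Fin p) (Fin p) ℝ :=
  (n : ℝ)⁻¹ • ((Matrix.of X)ᵀ * Matrix.of X)

/-- The (negative log-likelihood) objective `⟨Θ, S⟩ - log det Θ`. -/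
noncomputable def objective {m : Type*} [Fintype m] [DecidableEq m] (S T : Matrix m m ℝ) : ℝ :=
  mip T S - Real.log T.det

/-- `T` is the sign-constrained Gaussian MLE for the sample covariance `S`:
it minimizes `⟨Θ, S⟩ - log det Θ` over positive definite `Θ ∈ ℳ`. -/
def IsSignMLE {m : Type*} [Fintype m] [DecidableEq m] (S T : Matrix m m ℝ) : Prop :=
  T ∈ Mmat m ∧ T.PosDef ∧ ∀ T' ∈ Mmat m, T'.PosDef → objective S T ≤ objective S T'

/-- Density of the `N(0, V)` distribution on `ℝᵖ` (with respect to Lebesgue measure). -/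
noncomputable def gaussPdf {p : ℕ} (V : Matrix (Fin p) (Fin p) ℝ) (x : Fin p → ℝ) : ENNReal :=
  ENNReal.ofReal ((((2 * Real.pi) ^ p * V.det) ^ (-(1 : ℝ) / 2)) *
    Real.exp (-(x ⬝ᵥ (V⁻¹ *ᵥ x)) / 2))

/-- The centered multivariate Gaussian measure `N(0, V)` on `ℝᵖ`. -/
noncomputable def gaussMeasure {p : ℕ} (V : Matrix (Fin p) (Fin p) ℝ) : Measure (Fin p → ℝ) :=
  volume.withDensity (gaussPdf V)

/-- Law of a data matrix `X ∈ ℝ^{n×p}` with i.i.d. rows `N(0, V)`. -/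
noncomputable def model (n : ℕ) {p : ℕ} (V : Matrix (Fin p) (Fin p) ℝ) :
    Measure (Fin n → Fin p → ℝ) :=
  Measure.pi fun _ : Fin n => gaussMeasure V

/-- The class `𝒟` of diagonal matrices with strictly positive diagonal. -/
def posDiag (p : ℕ) : Set (Matrix (Fin p) (Fin p) ℝ) :=
  {T | ∃ d : Fin p → ℝ, (∀ j, 0 < d j) ∧ T = Matrix.diagonal d}

/-- Largest (real) eigenvalue of a matrix. -/
noncomputable def lamMax {m : Type*} [Fintype m] (A : Matrix m m ℝ) : ℝ :=
  sSup {t | ∃ v : m → ℝ, v ≠ 0 ∧ A *ᵥ v = t • v}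

/-- Smallest (real) eigenvalue of a matrix. -/
noncomputable def lamMin {m : Type*} [Fintype m] (A : Matrix m m ℝ) : ℝ :=
  sInf {t | ∃ v : m → ℝ, v ≠ 0 ∧ A *ᵥ v = t • v}

/-- Spectral norm (largest singular value) of a matrix. -/
noncomputable def specNorm {m : Type*} [Fintype m] (A : Matrix m m ℝ) : ℝ :=
  sSup {t | ∃ v : m → ℝ, (∑ i, (v i) ^ 2) = 1 ∧ t = Real.sqrt (∑ i, ((A *ᵥ v) i) ^ 2)}

/-- Squared Frobenius norm. -/
noncomputable def frobSq {m l : Type*} [Fintype m] [Fintype l] (A : Matrix m l ℝ) : ℝ :=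
  ∑ i, ∑ j, (A i j) ^ 2

/-- Matrices inherit the product measurable structure. -/
instance matrixMeasurableSpace {m l : Type*} : MeasurableSpace (Matrix m l ℝ) :=
  MeasurableSpace.pi

theorem mip_comm {m : Type*} [Fintype m] (A B : Matrix m m ℝ) : mip A B = mip B A := by
  rw [mip, mip, ← trace_transpose, transpose_mul, transpose_transpose]

theorem convex_Mmat (m : Type*) [Fintype m] : Convex ℝ (Mmat m) := by
  intro A hA B hB a b ha hb _
  refine ⟨(hA.1.smul ha).add (hB.1.smul hb), fun i j hij => ?_⟩
  simp only [Matrix.add_apply, Matrix.smul_apply, smul_eq_mul]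
  linarith [mul_nonpos_of_nonneg_of_nonpos ha (hA.2 i j hij),
    mul_nonpos_of_nonneg_of_nonpos hb (hB.2 i j hij)]

theorem convex_setOf_posDef (m : Type*) [Fintype m] :
    Convex ℝ {A : Matrix m m ℝ | A.PosDef} :=
  convex_iff_forall_pos.2 fun _ hA _ hB _ _ ha hb _ => (hA.smul ha).add (hB.smul hb)

theorem _root_.HasDerivAt.nonneg_of_isMinOn_Icc {g : ℝ → ℝ} {a : ℝ} (hg : HasDerivAt g a 0)
    (hmin : IsMinOn g (Set.Icc 0 1) 0) : 0 ≤ a := by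
  have h1 : (1 : ℝ) ∈ posTangentConeAt (Set.Icc 0 1) 0 :=
    mem_posTangentConeAt_of_segment_subset (by simp [segment_eq_Icc])
  simpa using hmin.localize.hasFDerivWithinAt_nonneg hg.hasFDerivAt.hasFDerivWithinAt h1

open Polynomial in
theorem hasDerivAt_det_one_add_smul {m 𝕜 : Type*} [Fintype m] [DecidableEq m]
    [NontriviallyNormedField 𝕜] (M : Matrix m m 𝕜) :
    HasDerivAt (fun t : 𝕜 => (1 + t • M).det) M.trace 0 := by
  set q := (det (1 + (X : 𝕜[X]) • M.map C)).divX.divX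
  have hq : HasDerivAt (fun t : 𝕜 => q.eval t * t ^ 2) 0 0 :=
    ((q.hasDerivAt 0).mul (hasDerivAt_pow 2 0)).congr_deriv (by simp)
  have hlin : HasDerivAt (fun t : 𝕜 => 1 + M.trace * t) M.trace 0 := by
    simpa using ((hasDerivAt_id (0 : 𝕜)).const_mul M.trace).const_add 1
  have hexp : (fun t : 𝕜 => (1 + t • M).det) = fun t => 1 + M.trace * t + q.eval t * t ^ 2 :=
    funext fun t => det_one_add_smul t M
  rw [hexp]
  exact (hlin.add hq).congr_deriv (add_zero _)

theorem hasDerivAt_log_det_add_smul {m : Type*} [Fintype m] [DecidableEq m]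
    {A : Matrix m m ℝ} (hA : A.det ≠ 0) (D : Matrix m m ℝ) :
    HasDerivAt (fun t : ℝ => Real.log (A + t • D).det) (A⁻¹ * D).trace 0 := by
  have hfac : ∀ t : ℝ, (A + t • D).det = A.det * (1 + t • (A⁻¹ * D)).det := fun t => by
    rw [← det_mul, Matrix.mul_add, mul_one, Matrix.mul_smul,
      mul_nonsing_inv_cancel_left _ _ (isUnit_iff_ne_zero.2 hA)]
  have hdet : HasDerivAt (fun t : ℝ => (A + t • D).det) (A.det * (A⁻¹ * D).trace) 0 := by
    simp_rw [hfac]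
    exact (hasDerivAt_det_one_add_smul _).const_mul _
  simpa [hA] using hdet.log (by simpa using hA)

theorem hasDerivAt_objective_add_smul {m : Type*} [Fintype m] [DecidableEq m]
    (S : Matrix m m ℝ) {A : Matrix m m ℝ} (hA : A.IsSymm) (hdet : A.det ≠ 0)
    (D : Matrix m m ℝ) :
    HasDerivAt (fun t : ℝ => objective S (A + t • D)) (mip D (S - A⁻¹)) 0 := by
  have hlin : HasDerivAt (fun t : ℝ => mip (A + t • D) S) (mip D S) 0 := by
    have : (fun t : ℝ => mip (A + t • D) S) = fun t => mip A S + t * mip D S := by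
      funext t
      simp [mip, transpose_add, Matrix.add_mul, trace_add]
    rw [this]
    simpa using ((hasDerivAt_id (0 : ℝ)).mul_const (mip D S)).const_add (mip A S)
  have hinv : (A⁻¹ * D).trace = mip D A⁻¹ := by
    rw [mip_comm, mip, transpose_nonsing_inv, hA.eq]
  have hgrad : mip D (S - A⁻¹) = mip D S - (A⁻¹ * D).trace := by
    rw [hinv, mip, mip, mip, Matrix.mul_sub, trace_sub]
  rw [hgrad]
  exact hlin.sub (hasDerivAt_log_det_add_smul hdet D)

theorem mip_sub_inv_nonneg_of_isMinOn {m : Type*} [Fintype m] [DecidableEq m]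
    {S A B : Matrix m m ℝ} {s : Set (Matrix m m ℝ)} (hmin : IsMinOn (objective S) s A)
    (hs : Convex ℝ s) (hA : A ∈ s) (hsymm : A.IsSymm) (hdet : A.det ≠ 0) (hB : B ∈ s) :
    0 ≤ mip (B - A) (S - A⁻¹) := by
  refine (hasDerivAt_objective_add_smul S hsymm hdet (B - A)).nonneg_of_isMinOn_Icc ?_
  refine isMinOn_iff.2 fun t ht => ?_
  simpa using isMinOn_iff.1 hmin _ (hs.add_smul_sub_mem hA hB ht)

theorem stmt_15_general (p : ℕ) (S Θhat : Matrix (Fin p) (Fin p) ℝ)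
    (hmem : Θhat ∈ Mmat (Fin p)) (hpd : Θhat.PosDef)
    (hmin : ∀ Θ' ∈ Mmat (Fin p), Θ'.PosDef → objective S Θhat ≤ objective S Θ')
    (Θstar : Matrix (Fin p) (Fin p) ℝ)
    (hstar : Θstar ∈ Mmat (Fin p)) (hstarpd : Θstar.PosDef) :
    stein Θhat Θstar ≤ (2 * (p : ℝ))⁻¹ * mip (S - Θstar⁻¹) (Θstar - Θhat) := by
  have hfoc : 0 ≤ mip (Θstar - Θhat) (S - Θhat⁻¹) :=
    mip_sub_inv_nonneg_of_isMinOn (s := Mmat (Fin p) ∩ {T | T.PosDef})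
      (isMinOn_iff.2 fun T hT => hmin T hT.1 hT.2)
      ((convex_Mmat _).inter (convex_setOf_posDef _)) ⟨hmem, hpd⟩ hpd.isHermitian
      hpd.det_pos.ne' ⟨hstar, hstarpd⟩
  have hsplit : mip (Θhat - Θstar) (Θstar⁻¹ - Θhat⁻¹)
      = mip (S - Θstar⁻¹) (Θstar - Θhat) - mip (Θstar - Θhat) (S - Θhat⁻¹) := by
    rw [mip_comm (S - _)]
    simp only [mip, transpose_sub, Matrix.sub_mul, Matrix.mul_sub, trace_sub]
    ring
  rw [stein, Fintype.card_fin, hsplit]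
  exact mul_le_mul_of_nonneg_left (sub_le_self _ hfoc) (by positivity)

/-- The basic inequality: if `Θ̂ ∈ ℳ` is positive definite and minimizes
`⟨Θ, S⟩ - log det Θ` over positive definite members of `ℳ`, then for every
positive definite `Θ* ∈ ℳ`,
`L(Θ̂, Θ*) ≤ (1/(2p)) ⟨S - Σ*, Θ* - Θ̂⟩`. -/
theorem stmt_15 (p : ℕ) (S Θhat : Matrix (Fin p) (Fin p) ℝ) (hS : S.IsSymm)
    (hmem : Θhat ∈ Mmat (Fin p)) (hpd : Θhat.PosDef)
    (hmin : ∀ Θ' ∈ Mmat (Fin p), Θ'.PosDef → objective S Θhat ≤ objective S Θ')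
    (Θstar : Matrix (Fin p) (Fin p) ℝ)
    (hstar : Θstar ∈ Mmat (Fin p)) (hstarpd : Θstar.PosDef) :
    stein Θhat Θstar ≤ (2 * (p : ℝ))⁻¹ * mip (S - Θstar⁻¹) (Θstar - Θhat) :=
  stmt_15_general p S Θhat hmem hpd hmin Θstar hstar hstarpd

end CovEst
end

section
/- Let Θ ∈ ℳ^{p×p} and let Σ be a symmetric p×p matrix with all entries nonnegative and unit diagonal (Σ_{jj} = 1 for all j). Then tr(ΘΣ) ≥ (1 − max_{j≠k} Σ_{jk})·tr(Θ). -/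
open MeasureTheory Matrix Real

namespace CovEst

/- Off the diagonal `Θᵢₖ ≤ 0` and `Σₖᵢ ≤ M`, so `Θᵢₖ Σₖᵢ ≥ M Θᵢₖ`; on the diagonal
`Θᵢᵢ Σᵢᵢ = M Θᵢᵢ + (1 - M) Θᵢᵢ`. Summing, `tr(ΘΣ) ≥ M 𝟙ᵀΘ𝟙 + (1 - M) tr Θ`, and
`𝟙ᵀΘ𝟙 ≥ 0` because `Θ` is positive semidefinite. -/

lemma sum_entries_nonneg_of_posSemidef {m : Type*} [Fintype m] {A : Matrix m m ℝ}
    (hA : A.PosSemidef) : 0 ≤ ∑ i, ∑ k, A i k := by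
  simpa [dotProduct, mulVec] using hA.dotProduct_mulVec_nonneg 1

lemma le_maxOffDiag {m : Type*} [Finite m] (V : Matrix m m ℝ) {j k : m} (hjk : j ≠ k) :
    V j k ≤ maxOffDiag V := by
  refine le_csSup ((Set.finite_range fun jk : m × m => V jk.1 jk.2).subset ?_).bddAbove
    ⟨j, k, hjk, rfl⟩
  rintro _ ⟨j, k, -, rfl⟩
  exact ⟨(j, k), rfl⟩

lemma maxOffDiag_nonneg {m : Type*} {V : Matrix m m ℝ} (hV : ∀ i j, 0 ≤ V i j) :
    0 ≤ maxOffDiag V :=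
  Real.sSup_nonneg <| by
    rintro _ ⟨j, k, -, rfl⟩
    exact hV j k

lemma trace_mul_ge_of_offDiag_le {m : Type*} [Fintype m] {Θ V : Matrix m m ℝ} {M : ℝ}
    (hΘ : Θ ∈ Mmat m) (hdiag : ∀ j, V j j = 1) (hoff : ∀ j k, j ≠ k → V j k ≤ M)
    (hM : 0 ≤ M) : (1 - M) * Θ.trace ≤ (Θ * V).trace := by
  classical
  have hterm : ∀ i k, M * Θ i k + (if i = k then (1 - M) * Θ i k else 0) ≤ Θ i k * V k i := by
    intro i k
    by_cases hik : i = k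
    · subst hik
      rw [if_pos rfl, hdiag]
      linarith
    · simp only [hik, if_false, add_zero]
      nlinarith [hΘ.2 i k hik, hoff k i (Ne.symm hik)]
  calc (1 - M) * Θ.trace
      ≤ M * ∑ i, ∑ k, Θ i k + (1 - M) * Θ.trace :=
        le_add_of_nonneg_left (mul_nonneg hM (sum_entries_nonneg_of_posSemidef hΘ.1))
    _ = ∑ i, ∑ k, (M * Θ i k + if i = k then (1 - M) * Θ i k else 0) := by
        simp [Finset.sum_add_distrib, Finset.mul_sum, trace]
    _ ≤ ∑ i, ∑ k, Θ i k * V k i :=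
        Finset.sum_le_sum fun i _ => Finset.sum_le_sum fun k _ => hterm i k
    _ = (Θ * V).trace := by
        simp [trace, mul_apply]

theorem stmt_16_general (p : ℕ) (Θ V : Matrix (Fin p) (Fin p) ℝ) (hΘ : Θ ∈ Mmat (Fin p))
    (hnn : ∀ i j, 0 ≤ V i j) (hdiag : ∀ j, V j j = 1) :
    (1 - maxOffDiag V) * Θ.trace ≤ (Θ * V).trace :=
  trace_mul_ge_of_offDiag_le hΘ hdiag (fun _ _ => le_maxOffDiag V) (maxOffDiag_nonneg hnn)

/-- For `Θ ∈ ℳ` and a symmetric entrywise-nonnegative matrix `Σ` with unit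
diagonal, `tr(ΘΣ) ≥ (1 - max_{j≠k} Σ_{jk}) tr Θ`. -/
theorem stmt_16 (p : ℕ) (Θ V : Matrix (Fin p) (Fin p) ℝ) (hΘ : Θ ∈ Mmat (Fin p))
    (hsym : V.IsSymm) (hnn : ∀ i j, 0 ≤ V i j) (hdiag : ∀ j, V j j = 1) :
    (1 - maxOffDiag V) * Θ.trace ≤ (Θ * V).trace :=
  stmt_16_general p Θ V hΘ hnn hdiag

end CovEst
end

section
/- Let k be a positive integer, let A be a ⌈p/2⌉ × ⌊p/2⌋ binary (0/1) matrix with exactly k nonzero entries per row and at most 2k nonzero entries per column, and let ε < 0 with 2k|ε| < 1. Define the p×p matrix Θ in block form with identity diagonal blocks I_{⌈p/2⌉}, I_{⌊p/2⌋} and off-diagonal blocks εA and εAᵀ. Then Θ is a diagonally dominant symmetric M-matrix (Θ ∈ ℳ^{p×p}), its inverse Σ := Θ⁻¹ satisfies Σ_{jj} ≥ 1 for all j, and the maximum off-diagonal correlation satisfies max_{j≠k} Σ_{jk}/√(Σ_{jj}Σ_{kk}) ≤ max_{j≠k} Σ_{jk} ≤ 2k|ε| / (1 − (2kε)²). In particular,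 if 4k|ε| ≤ min(1 − γ⁻¹, 1/2) for some γ > 1, then γ(Σ) ≤ γ. -/
open MeasureTheory Matrix Real

namespace CovEst

/-- The two-block perturbation `Θ = [[I, εA], [εAᵀ, I]]`. -/
noncomputable def blockTheta (p : ℕ) (ε : ℝ)
    (A : Matrix (Fin ((p + 1) / 2)) (Fin (p / 2)) ℝ) :
    Matrix (Fin ((p + 1) / 2) ⊕ Fin (p / 2)) (Fin ((p + 1) / 2) ⊕ Fin (p / 2)) ℝ :=
  Matrix.fromBlocks 1 (ε • A) (ε • Aᵀ) 1

end CovEst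

/-!
Write `Θ = 1 - T` with `T = |ε| • [[0, A], [Aᵀ, 0]]`: `T` is symmetric, entrywise nonnegative,
and has row sums at most `δ = 2k|ε| < 1`. Hence `Θ` is diagonally dominant, so positive
semidefinite by Gershgorin, and `Σ = Θ⁻¹ = ∑ Tⁿ` is entrywise nonnegative with
`(Tⁿ)_{jl} ≤ δⁿ`; its diagonal entries are at least the `n = 0` term `1`, so every correlation
is at most the corresponding entry of `Σ`. Since `T` is the weighted adjacency matrix of a
bipartite graph, `(Tⁿ)_{jl}` vanishes unless `n` has the parity of the walks from `j` to `l`,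
so of two consecutive terms of the series for `Σ_{jl}` at most one is nonzero. For `j ≠ l` the
term `n = 0` vanishes, and pairing the terms `n = 2m + 1, 2m + 2` gives
`Σ_{jl} ≤ ∑ δ^{2m+1} = δ / (1 - δ²)`.
-/

theorem tsum_le_div_one_sub_sq_of_alternating {a : ℕ → ℝ} {δ : ℝ} (ha : ∀ n, 0 ≤ a n)
    (hle : ∀ n, a n ≤ δ ^ n) (ha0 : a 0 = 0) (halt : ∀ n, a n = 0 ∨ a (n + 1) = 0)
    (hδ : 0 ≤ δ) (hδ1 : δ < 1) : ∑' n, a n ≤ δ / (1 - δ ^ 2) := by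
  have hδ2 : δ ^ 2 < 1 := by nlinarith
  have hgeo : Summable fun m : ℕ => δ * (δ ^ 2) ^ m :=
    (summable_geometric_of_lt_one (sq_nonneg δ) hδ2).mul_left δ
  have hpair (m : ℕ) : a (2 * m + 1) + a (2 * m + 2) ≤ δ * (δ ^ 2) ^ m := by
    have hpow : δ ^ (2 * m + 2) ≤ δ ^ (2 * m + 1) := pow_le_pow_of_le_one hδ hδ1.le (by omega)
    have hsplit : δ ^ (2 * m + 1) = δ * (δ ^ 2) ^ m := by ring
    rcases halt (2 * m + 1) with h | h <;> rw [h] <;> linarith [hle (2 * m + 1), hle (2 * m + 2)]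
  have hodd : Summable fun m => a (2 * m + 1) :=
    .of_nonneg_of_le (fun m => ha _) (fun m => by linarith [hpair m, ha (2 * m + 2)]) hgeo
  have heven : Summable fun m => a (2 * m + 2) :=
    .of_nonneg_of_le (fun m => ha _) (fun m => by linarith [hpair m, ha (2 * m + 1)]) hgeo
  have hs : Summable a := .of_nonneg_of_le ha hle (summable_geometric_of_lt_one hδ hδ1)
  calc ∑' n, a n = ∑' n, a (n + 1) := by rw [hs.tsum_eq_zero_add, ha0, zero_add]
    _ = ∑' m, a (2 * m + 1) + ∑' m, a (2 * m + 2) :=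
      (tsum_even_add_odd (f := fun n => a (n + 1)) hodd heven).symm
    _ = ∑' m, (a (2 * m + 1) + a (2 * m + 2)) := (hodd.tsum_add heven).symm
    _ ≤ ∑' m : ℕ, δ * (δ ^ 2) ^ m := (hodd.add heven).tsum_le_tsum hpair hgeo
    _ = δ / (1 - δ ^ 2) := by
      rw [tsum_mul_left, tsum_geometric_of_lt_one (sq_nonneg δ) hδ2, div_eq_mul_inv]

theorem div_sqrt_mul_le_self {x a b : ℝ} (hx : 0 ≤ x) (ha : 1 ≤ a) (hb : 1 ≤ b) :
    x / √(a * b) ≤ x :=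
  div_le_self hx (Real.one_le_sqrt.mpr (one_le_mul_of_one_le_of_one_le ha hb))

theorem div_one_sub_sq_le {δ c : ℝ} (hδ : 0 ≤ δ) (hδ2 : δ ≤ 1 / 2) (hc : 2 * δ ≤ c) :
    δ / (1 - δ ^ 2) ≤ c := by
  rw [div_le_iff₀ (by nlinarith)]
  nlinarith [mul_le_mul_of_nonneg_right hc (by nlinarith : 0 ≤ 1 - δ ^ 2),
    mul_nonneg hδ (by nlinarith : 0 ≤ 1 - 2 * δ ^ 2)]

namespace Matrix

variable {ι : Type*} [Fintype ι] [DecidableEq ι]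

theorem IsHermitian.posSemidef_of_sum_abs_le_diag {A : Matrix ι ι ℝ} (hA : A.IsHermitian)
    (h : ∀ i, ∑ j ∈ Finset.univ.erase i, |A i j| ≤ A i i) : A.PosSemidef := by
  rw [hA.posSemidef_iff_eigenvalues_nonneg]
  intro i
  have hv : (⇑(hA.eigenvectorBasis i) : ι → ℝ) ≠ 0 := fun h0 =>
    hA.eigenvectorBasis.orthonormal.ne_zero i (by ext j; simp [h0])
  have hμ : Module.End.HasEigenvalue (toLin' A) (hA.eigenvalues i) :=
    Module.End.hasEigenvalue_of_hasEigenvector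
      ⟨Module.End.mem_eigenspace_iff.mpr (by simpa using hA.mulVec_eigenvectorBasis i), hv⟩
  obtain ⟨k, hk⟩ := eigenvalue_mem_ball hμ
  rw [Metric.mem_closedBall, Real.dist_eq] at hk
  simp only [Real.norm_eq_abs] at hk
  simp only [Pi.zero_apply]
  linarith [h k, neg_abs_le (hA.eigenvalues i - A k k)]

theorem eq_add_of_pow_apply_ne_zero {R G : Type*} [Semiring R] [AddMonoidWithOne G]
    {t : Matrix ι ι R} {f : ι → G} (hf : ∀ i j, t i j ≠ 0 → f j = f i + 1) (n : ℕ) {i j : ι}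
    (h : (t ^ n) i j ≠ 0) : f j = f i + n := by
  induction n generalizing j with
  | zero =>
    obtain rfl : i = j := by_contra fun hij => h (by simp [one_apply_ne hij])
    simp
  | succ n ih =>
    rw [pow_succ, mul_apply] at h
    obtain ⟨m, -, hm⟩ := Finset.exists_ne_zero_of_sum_ne_zero h
    rw [hf m j (right_ne_zero_of_mul hm), ih (left_ne_zero_of_mul hm), Nat.cast_succ, add_assoc]

theorem pow_apply_eq_zero_or_pow_succ_apply_eq_zero {R : Type*} [Semiring R]
    {t : Matrix ι ι R} {f : ι → ZMod 2} (hf : ∀ i j, t i j ≠ 0 → f j = f i + 1) (n : ℕ)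
    (i j : ι) : (t ^ n) i j = 0 ∨ (t ^ (n + 1)) i j = 0 := by
  by_contra! h
  have := (eq_add_of_pow_apply_ne_zero hf n h.1).symm.trans
    (eq_add_of_pow_apply_ne_zero hf (n + 1) h.2)
  rw [Nat.cast_succ, ← add_assoc, left_eq_add] at this
  exact one_ne_zero this

section Nonneg

variable {t : Matrix ι ι ℝ} {δ : ℝ}

theorem sum_pow_apply_le (ht : ∀ i j, 0 ≤ t i j) (hrow : ∀ i, ∑ j, t i j ≤ δ) (hδ : 0 ≤ δ)
    (n : ℕ) (i : ι) : ∑ j, (t ^ n) i j ≤ δ ^ n := by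
  induction n generalizing i with
  | zero => simp [one_apply]
  | succ n ih =>
    calc ∑ j, (t ^ (n + 1)) i j = ∑ m, t i m * ∑ j, (t ^ n) m j := by
          simp only [pow_succ', mul_apply, Finset.mul_sum]
          exact Finset.sum_comm
      _ ≤ ∑ m, t i m * δ ^ n :=
          Finset.sum_le_sum fun m _ => mul_le_mul_of_nonneg_left (ih m) (ht i m)
      _ = (∑ m, t i m) * δ ^ n := (Finset.sum_mul ..).symm
      _ ≤ δ * δ ^ n := mul_le_mul_of_nonneg_right (hrow i) (by positivity)
      _ = δ ^ (n + 1) := (pow_succ' δ n).symm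

theorem pow_apply_le (ht : ∀ i j, 0 ≤ t i j) (hrow : ∀ i, ∑ j, t i j ≤ δ) (hδ : 0 ≤ δ)
    (n : ℕ) (i j : ι) : (t ^ n) i j ≤ δ ^ n :=
  (Finset.single_le_sum (fun l _ => pow_apply_nonneg ht n i l) (Finset.mem_univ j)).trans
    (sum_pow_apply_le ht hrow hδ n i)

theorem hasSum_pow_apply_inv_one_sub (ht : ∀ i j, 0 ≤ t i j) (hrow : ∀ i, ∑ j, t i j ≤ δ)
    (hδ : 0 ≤ δ) (hδ1 : δ < 1) (i j : ι) :
    HasSum (fun n => (t ^ n) i j) ((1 - t)⁻¹ i j) := by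
  have hs : Summable fun n : ℕ => t ^ n :=
    Pi.summable.mpr fun i => Pi.summable.mpr fun j =>
      .of_nonneg_of_le (pow_apply_nonneg ht · i j) (pow_apply_le ht hrow hδ · i j)
        (summable_geometric_of_lt_one hδ hδ1)
  have h := hs.hasSum
  rw [← inv_eq_right_inv hs.one_sub_mul_tsum_pow] at h
  exact Pi.hasSum.mp (Pi.hasSum.mp h i) j

theorem one_le_inv_one_sub_apply_self (ht : ∀ i j, 0 ≤ t i j) (hrow : ∀ i, ∑ j, t i j ≤ δ)
    (hδ : 0 ≤ δ) (hδ1 : δ < 1) (i : ι) : 1 ≤ (1 - t)⁻¹ i i := by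
  simpa using le_hasSum (hasSum_pow_apply_inv_one_sub ht hrow hδ hδ1 i i) 0
    fun n _ => pow_apply_nonneg ht n i i

theorem inv_one_sub_apply_nonneg (ht : ∀ i j, 0 ≤ t i j) (hrow : ∀ i, ∑ j, t i j ≤ δ)
    (hδ : 0 ≤ δ) (hδ1 : δ < 1) (i j : ι) : 0 ≤ (1 - t)⁻¹ i j :=
  (hasSum_pow_apply_inv_one_sub ht hrow hδ hδ1 i j).nonneg fun n => pow_apply_nonneg ht n i j

theorem inv_one_sub_apply_le {f : ι → ZMod 2} (hf : ∀ i j, t i j ≠ 0 → f j = f i + 1)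
    (ht : ∀ i j, 0 ≤ t i j) (hrow : ∀ i, ∑ j, t i j ≤ δ) (hδ : 0 ≤ δ) (hδ1 : δ < 1)
    {i j : ι} (hij : i ≠ j) : (1 - t)⁻¹ i j ≤ δ / (1 - δ ^ 2) := by
  rw [← (hasSum_pow_apply_inv_one_sub ht hrow hδ hδ1 i j).tsum_eq]
  exact tsum_le_div_one_sub_sq_of_alternating (pow_apply_nonneg ht · i j)
    (pow_apply_le ht hrow hδ · i j) (by simp [one_apply_ne hij])
    (pow_apply_eq_zero_or_pow_succ_apply_eq_zero hf · i j) hδ hδ1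

theorem sum_abs_one_sub_apply_le (ht : ∀ i j, 0 ≤ t i j) (hrow : ∀ i, ∑ j, t i j ≤ 1) (i : ι) :
    ∑ j ∈ Finset.univ.erase i, |(1 - t) i j| ≤ (1 - t) i i := by
  have hoff : ∑ j ∈ Finset.univ.erase i, |(1 - t) i j| = ∑ j ∈ Finset.univ.erase i, t i j :=
    Finset.sum_congr rfl fun j hj => by
      rw [sub_apply, one_apply_ne (Finset.ne_of_mem_erase hj).symm, zero_sub, abs_neg,
        abs_of_nonneg (ht i j)]
  rw [hoff, sub_apply, one_apply_eq]
  linarith [Finset.sum_erase_add _ (fun j => t i j) (Finset.mem_univ i), hrow i]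

end Nonneg

variable {m n : Type*}

theorem fromBlocks_apply_nonneg {A : Matrix m m ℝ} {B : Matrix m n ℝ} {C : Matrix n m ℝ}
    {D : Matrix n n ℝ} (hA : ∀ i j, 0 ≤ A i j) (hB : ∀ i j, 0 ≤ B i j) (hC : ∀ i j, 0 ≤ C i j)
    (hD : ∀ i j, 0 ≤ D i j) (i j : m ⊕ n) : 0 ≤ fromBlocks A B C D i j := by
  rcases i with i | i <;> rcases j with j | j
  exacts [hA i j, hB i j, hC i j, hD i j]

theorem sum_fromBlocks_zero_zero_apply_le [Fintype m] [Fintype n] {B : Matrix m n ℝ}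
    {C : Matrix n m ℝ} {δ : ℝ} (hB : ∀ i, ∑ j, B i j ≤ δ) (hC : ∀ i, ∑ j, C i j ≤ δ) (i : m ⊕ n) :
    ∑ j, fromBlocks 0 B C 0 i j ≤ δ := by
  rcases i with i | i <;> simp [Fintype.sum_sum_type, hB, hC]

theorem exists_zmod_two_coloring_fromBlocks_zero_zero {R : Type*} [Zero R] (B : Matrix m n R)
    (C : Matrix n m R) :
    ∃ f : m ⊕ n → ZMod 2, ∀ i j, fromBlocks 0 B C 0 i j ≠ 0 → f j = f i + 1 := by
  refine ⟨Sum.elim 0 1, ?_⟩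
  rintro (i | i) (j | j) h <;> simp_all
  rfl

end Matrix

namespace CovEst

theorem one_sub_mem_Mmat {ι : Type*} [Fintype ι] [DecidableEq ι] {t : Matrix ι ι ℝ}
    (hsymm : t.IsSymm) (ht : ∀ i j, 0 ≤ t i j) (hrow : ∀ i, ∑ j, t i j ≤ 1) :
    1 - t ∈ Mmat ι := by
  refine ⟨IsHermitian.posSemidef_of_sum_abs_le_diag ?_ (sum_abs_one_sub_apply_le ht hrow),
    fun i j hij => ?_⟩
  · rw [isHermitian_iff_isSymm]
    exact isSymm_one.sub hsymm
  · rw [Matrix.sub_apply, one_apply_ne hij, zero_sub, neg_nonpos]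
    exact ht i j

theorem blockTheta_eq_one_sub {p : ℕ} {ε : ℝ} (hε : ε ≤ 0)
    (A : Matrix (Fin ((p + 1) / 2)) (Fin (p / 2)) ℝ) :
    blockTheta p ε A = 1 - fromBlocks 0 (|ε| • A) (|ε| • A)ᵀ 0 := by
  rw [blockTheta, ← fromBlocks_one, sub_eq_add_neg, fromBlocks_neg, fromBlocks_add,
    abs_of_nonpos hε]
  simp

theorem gammaV_le {m : Type*} {V : Matrix m m ℝ} {γ : ℝ} (hγ : 1 < γ)
    (h : ∀ j l, j ≠ l → V j l / √(V j j * V l l) ≤ 1 - γ⁻¹) : gammaV V ≤ γ := by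
  have hγ0 : 0 < γ⁻¹ := inv_pos.mpr (by linarith)
  have hmax : maxCorr V ≤ 1 - γ⁻¹ :=
    Real.sSup_le (by rintro x ⟨j, l, hjl, rfl⟩; exact h j l hjl)
      (by linarith [inv_lt_one_of_one_lt₀ hγ])
  calc gammaV V = (1 - maxCorr V)⁻¹ := rfl
    _ ≤ (γ⁻¹)⁻¹ := inv_anti₀ hγ0 (by linarith)
    _ = γ := inv_inv γ

theorem stmt_18_general (p k : ℕ) (ε : ℝ) (hε : ε < 0)
    (hkε : 2 * (k : ℝ) * |ε| < 1)
    (A : Matrix (Fin ((p + 1) / 2)) (Fin (p / 2)) ℝ)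
    (hbin : ∀ i j, A i j = 0 ∨ A i j = 1)
    (hrow : ∀ i, ∑ j, A i j = (k : ℝ))
    (hcol : ∀ j, ∑ i, A i j ≤ 2 * (k : ℝ)) :
    blockTheta p ε A ∈ Mmat (Fin ((p + 1) / 2) ⊕ Fin (p / 2)) ∧
    (∀ i, ∑ j ∈ Finset.univ.erase i, |blockTheta p ε A i j| ≤ blockTheta p ε A i i) ∧
    (∀ j, 1 ≤ (blockTheta p ε A)⁻¹ j j) ∧
    (∀ j l, j ≠ l →
      (blockTheta p ε A)⁻¹ j l /
          Real.sqrt ((blockTheta p ε A)⁻¹ j j * (blockTheta p ε A)⁻¹ l l) ≤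
        (blockTheta p ε A)⁻¹ j l ∧
      (blockTheta p ε A)⁻¹ j l ≤ 2 * k * |ε| / (1 - (2 * k * ε) ^ 2)) ∧
    (∀ γ : ℝ, 1 < γ → 4 * k * |ε| ≤ min (1 - γ⁻¹) (1 / 2) →
      gammaV (blockTheta p ε A)⁻¹ ≤ γ) := by
  set δ := 2 * (k : ℝ) * |ε| with hδ
  set B := |ε| • A
  set t := fromBlocks 0 B Bᵀ 0
  have hB (i j) : 0 ≤ B i j :=
    mul_nonneg (abs_nonneg ε) (by rcases hbin i j with h | h <;> simp [h])
  have ht : ∀ i j, 0 ≤ t i j := fromBlocks_apply_nonneg (fun _ _ => le_rfl) hB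
    (fun i j => hB j i) (fun _ _ => le_rfl)
  have htrow : ∀ i, ∑ j, t i j ≤ δ := sum_fromBlocks_zero_zero_apply_le
    (fun i => by simp [B, ← Finset.mul_sum, hrow]; nlinarith [abs_nonneg ε])
    (fun j => by simp [B, ← Finset.mul_sum]; nlinarith [hcol j, abs_nonneg ε])
  have htrow1 (i) : ∑ j, t i j ≤ 1 := (htrow i).trans hkε.le
  have hδ0 : 0 ≤ δ := by positivity
  obtain ⟨f, hf⟩ := exists_zmod_two_coloring_fromBlocks_zero_zero B Bᵀ
  have hdiag := one_le_inv_one_sub_apply_self ht htrow hδ0 hkε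
  have hcorr (j l) : (1 - t)⁻¹ j l / √((1 - t)⁻¹ j j * (1 - t)⁻¹ l l) ≤ (1 - t)⁻¹ j l :=
    div_sqrt_mul_le_self (inv_one_sub_apply_nonneg ht htrow hδ0 hkε j l) (hdiag j) (hdiag l)
  have hoff (j l) (hjl : j ≠ l) : (1 - t)⁻¹ j l ≤ δ / (1 - δ ^ 2) :=
    inv_one_sub_apply_le hf ht htrow hδ0 hkε hjl
  have hbound : 2 * k * |ε| / (1 - (2 * k * ε) ^ 2) = δ / (1 - δ ^ 2) := by
    simp only [hδ, mul_pow, sq_abs]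
  rw [blockTheta_eq_one_sub hε.le, hbound]
  refine ⟨one_sub_mem_Mmat (IsSymm.fromBlocks isSymm_zero rfl isSymm_zero) ht htrow1,
    sum_abs_one_sub_apply_le ht htrow1, hdiag, fun j l hjl => ⟨hcorr j l, hoff j l hjl⟩,
    fun γ hγ hγε => gammaV_le hγ fun j l hjl => (hcorr j l).trans ((hoff j l hjl).trans ?_)⟩
  rw [le_min_iff] at hγε
  exact div_one_sub_sq_le hδ0 (by linarith [hγε.2]) (by linarith [hγε.1])

/-- Properties of the minimax construction: for a binary matrix `A` with `k`
nonzero entries per row, at most `2k` per column, and `ε < 0` with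
`2k|ε| < 1`, the matrix `Θ = [[I, εA], [εAᵀ, I]]` is a diagonally dominant
symmetric `M`-matrix, `Σ = Θ⁻¹` has diagonal entries `≥ 1`, all its
correlations are bounded by `max_{j≠l} Σ_{jl} ≤ 2k|ε| / (1 - (2kε)²)`, and if
moreover `4k|ε| ≤ min(1 - γ⁻¹, 1/2)` for some `γ > 1`, then `γ(Σ) ≤ γ`. -/
theorem stmt_18 (p k : ℕ) (hk : 0 < k) (ε : ℝ) (hε : ε < 0)
    (hkε : 2 * (k : ℝ) * |ε| < 1)
    (A : Matrix (Fin ((p + 1) / 2)) (Fin (p / 2)) ℝ)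
    (hbin : ∀ i j, A i j = 0 ∨ A i j = 1)
    (hrow : ∀ i, ∑ j, A i j = (k : ℝ))
    (hcol : ∀ j, ∑ i, A i j ≤ 2 * (k : ℝ)) :
    blockTheta p ε A ∈ Mmat (Fin ((p + 1) / 2) ⊕ Fin (p / 2)) ∧
    (∀ i, ∑ j ∈ Finset.univ.erase i, |blockTheta p ε A i j| ≤ blockTheta p ε A i i) ∧
    (∀ j, 1 ≤ (blockTheta p ε A)⁻¹ j j) ∧
    (∀ j l, j ≠ l →
      (blockTheta p ε A)⁻¹ j l /
          Real.sqrt ((blockTheta p ε A)⁻¹ j j * (blockTheta p ε A)⁻¹ l l) ≤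
        (blockTheta p ε A)⁻¹ j l ∧
      (blockTheta p ε A)⁻¹ j l ≤ 2 * k * |ε| / (1 - (2 * k * ε) ^ 2)) ∧
    (∀ γ : ℝ, 1 < γ → 4 * k * |ε| ≤ min (1 - γ⁻¹) (1 / 2) →
      gammaV (blockTheta p ε A)⁻¹ ≤ γ) :=
  stmt_18_general p k ε hε hkε A hbin hrow hcol

end CovEst
end

section
/- Let k be a positive integer, ε ∈ ℝ, and let 𝒜 denote the set of ⌈p/2⌉ × ⌊p/2⌋ binary (0/1) matrices with exactly k nonzero entries per row and at most 2k nonzero entries per column. For b ∈ {0,1}^{⌈p/2⌉} and A ∈ 𝒜, let Θ_{A,b} be the p×p matrix with identity diagonal blocks and off-diagonal block ε·((b⊗e)∘A) and its transpose, where (b⊗e)∘A zeroes out the rows j of A with b_j = 0. Then for all A, A' ∈ 𝒜 and all b ≠ b' in {0,1}^{⌈p/2⌉}, the squared Frobenius distance satisfies ‖Θ_{A,b} − Θ_{A',b'}‖_F² ≥ 2kε²·H(b, b'), where H(b,b') is the Hamming distance between b and b'. -/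
open MeasureTheory Matrix Real

namespace CovEst

/-- The matrix `Θ_{A,b} = [[I, ε(b⊗e)∘A], [ε((b⊗e)∘A)ᵀ, I]]`, where
`(b⊗e)∘A` zeroes out the rows `j` of `A` with `b_j = 0`. -/
noncomputable def thetaAB (p : ℕ) (ε : ℝ)
    (A : Matrix (Fin ((p + 1) / 2)) (Fin (p / 2)) ℝ) (b : Fin ((p + 1) / 2) → ℝ) :
    Matrix (Fin ((p + 1) / 2) ⊕ Fin (p / 2)) (Fin ((p + 1) / 2) ⊕ Fin (p / 2)) ℝ :=
  Matrix.fromBlocks 1 (ε • Matrix.of fun i j => b i * A i j)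
    (ε • (Matrix.of fun i j => b i * A i j)ᵀ) 1

/-- Frobenius separation of the minimax construction:
`‖Θ_{A,b} - Θ_{A',b'}‖_F² ≥ 2 k ε² H(b, b')` for binary matrices `A, A'` with
`k` nonzero entries per row and at most `2k` per column, and binary vectors
`b ≠ b'`, where `H` is the Hamming distance. -/
theorem stmt_19 (p k : ℕ) (hk : 0 < k) (ε : ℝ)
    (A A' : Matrix (Fin ((p + 1) / 2)) (Fin (p / 2)) ℝ)
    (hbinA : ∀ i j, A i j = 0 ∨ A i j = 1)
    (hbinA' : ∀ i j, A' i j = 0 ∨ A' i j = 1)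
    (hrowA : ∀ i, ∑ j, A i j = (k : ℝ)) (hrowA' : ∀ i, ∑ j, A' i j = (k : ℝ))
    (hcolA : ∀ j, ∑ i, A i j ≤ 2 * (k : ℝ))
    (hcolA' : ∀ j, ∑ i, A' i j ≤ 2 * (k : ℝ))
    (b b' : Fin ((p + 1) / 2) → ℝ)
    (hb : ∀ i, b i = 0 ∨ b i = 1) (hb' : ∀ i, b' i = 0 ∨ b' i = 1) (hne : b ≠ b') :
    2 * k * ε ^ 2 * ((Finset.univ.filter fun i => b i ≠ b' i).card : ℝ) ≤
      frobSq (thetaAB p ε A b - thetaAB p ε A' b') := by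
    have key : frobSq (thetaAB p ε A b - thetaAB p ε A' b') =
        2 * ∑ i, ∑ j, (ε * (b i * A i j) - ε * (b' i * A' i j)) ^ 2 := by
      simp only [frobSq, thetaAB, Fintype.sum_sum_type, Matrix.sub_apply,
        Matrix.fromBlocks_apply₁₁, Matrix.fromBlocks_apply₁₂,
        Matrix.fromBlocks_apply₂₁, Matrix.fromBlocks_apply₂₂,
        Matrix.smul_apply, Matrix.of_apply, Matrix.transpose_apply, smul_eq_mul,
        sub_self, ne_eq, OfNat.ofNat_ne_zero, not_false_eq_true, zero_pow, Finset.sum_const_zero, zero_add, add_zero]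
      rw [Finset.sum_comm (s := Finset.univ) (t := Finset.univ)
        (f := fun i j => (ε * (b j * A j i) - ε * (b' j * A' j i)) ^ 2)]
      ring
    rw [key]
    have hinner : ∀ i, b i ≠ b' i →
        ∑ j, (ε * (b i * A i j) - ε * (b' i * A' i j)) ^ 2 = k * ε ^ 2 := by
      intro i hi
      rcases hb i with h1 | h1 <;> rcases hb' i with h2 | h2 <;>
        simp [h1, h2] at hi ⊢
      · have : ∀ j, (ε * A' i j) ^ 2 = ε ^ 2 * A' i j := by
          intro j; rcases hbinA' i j with h | h <;> simp [h] <;> ring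
        simp only [this, ← Finset.mul_sum, hrowA' i]; ring
      · have : ∀ j, (ε * A i j) ^ 2 = ε ^ 2 * A i j := by
          intro j; rcases hbinA i j with h | h <;> simp [h] <;> ring
        simp only [this, ← Finset.mul_sum, hrowA i]; ring
    have hbound : (k : ℝ) * ε ^ 2 * ((Finset.univ.filter fun i => b i ≠ b' i).card : ℝ) ≤
        ∑ i, ∑ j, (ε * (b i * A i j) - ε * (b' i * A' i j)) ^ 2 := by
      rw [← Finset.sum_filter_add_sum_filter_not Finset.univ (fun i => b i ≠ b' i)]
      have h1 : ∑ i ∈ Finset.univ.filter (fun i => b i ≠ b' i),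
          ∑ j, (ε * (b i * A i j) - ε * (b' i * A' i j)) ^ 2
          = (k : ℝ) * ε ^ 2 * ((Finset.univ.filter fun i => b i ≠ b' i).card : ℝ) := by
        rw [Finset.sum_congr rfl (fun i hi => hinner i (Finset.mem_filter.mp hi).2),
          Finset.sum_const, nsmul_eq_mul]
        ring
      rw [← h1]
      have h2 : (0:ℝ) ≤ ∑ i ∈ Finset.univ.filter (fun i => ¬ b i ≠ b' i),
          ∑ j, (ε * (b i * A i j) - ε * (b' i * A' i j)) ^ 2 :=
        Finset.sum_nonneg fun i _ => Finset.sum_nonneg fun j _ => sq_nonneg _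
      linarith
    nlinarith [hbound]

end CovEst
end
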